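/- arXiv:1801.03365 — 2 statements merged into one kernel-verified Lean document; each statement's English description precedes it below -/
import Mathlib

section
/- Let $0 \leq P \leq N$, $0 \leq n \leq N$, and $p = P/N$. For every integer $j \in \{0,\dots,n\}$: $\binom{N}{n}^{-1} \sum_{i=j}^{n} \binom{P}{i}\binom{N-P}{n-i}\binom{i}{j} \leq \binom{n}{j} p^j$. Consequently, for every real $\tau \geq 1$: $\binom{N}{n}^{-1} \sum_{i=0}^{n} \binom{P}{i}\binom{N-P}{n-i}\tau^i \leq (1 + (\tau-1)p)^n$. -/
open Finset

-- descending factorial inequality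
lemma descB (j : ℕ) {P N : ℕ} (hP : P ≤ N) :
    P.descFactorial j * N ^ j ≤ N.descFactorial j * P ^ j := by
  induction j with
  | zero => simp
  | succ j ih =>
    rw [Nat.descFactorial_succ, Nat.descFactorial_succ, pow_succ, pow_succ]
    have key : (P - j) * N ≤ (N - j) * P := by
      rcases le_or_gt P j with h | h
      · simp [Nat.sub_eq_zero_of_le h]
      calc (P - j) * N = P * N - j * N := by rw [Nat.sub_mul]
        _ ≤ N * P - j * P :=
          le_trans (le_of_eq (by rw [mul_comm])) (Nat.sub_le_sub_left (Nat.mul_le_mul_left j hP) _)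
        _ = (N - j) * P := by rw [Nat.sub_mul, mul_comm]
    calc (P - j) * P.descFactorial j * (N ^ j * N)
        = ((P - j) * N) * (P.descFactorial j * N ^ j) := by ring
      _ ≤ ((N - j) * P) * (N.descFactorial j * P ^ j) := Nat.mul_le_mul key ih
      _ = (N - j) * N.descFactorial j * (P ^ j * P) := by ring

lemma chooseB (j : ℕ) {P N : ℕ} (hP : P ≤ N) :
    P.choose j * N ^ j ≤ N.choose j * P ^ j := by
  have h := descB j hP
  rw [Nat.descFactorial_eq_factorial_mul_choose, Nat.descFactorial_eq_factorial_mul_choose,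
    mul_assoc, mul_assoc] at h
  exact Nat.le_of_mul_le_mul_left h (Nat.factorial_pos j)

-- sum identity (Lemma A)
lemma sumA {N P n j : ℕ} (hP : P ≤ N) (hj : j ≤ n) :
    ∑ i ∈ Finset.Icc j n, P.choose i * (N - P).choose (n - i) * i.choose j
      = P.choose j * (N - j).choose (n - j) := by
  rcases le_or_gt j P with hjP | hjP
  · have step : ∀ i ∈ Finset.Icc j n,
        P.choose i * (N - P).choose (n - i) * i.choose j
          = P.choose j * ((P - j).choose (i - j) * (N - P).choose (n - i)) := by
      intro i hi
      rw [Finset.mem_Icc] at hi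
      rcases le_or_gt i P with hiP | hiP
      · rw [mul_right_comm, Nat.choose_mul hi.1]; ring
      · rw [Nat.choose_eq_zero_of_lt hiP,
          Nat.choose_eq_zero_of_lt (by omega : P - j < i - j)]
        ring
    rw [Finset.sum_congr rfl step, ← Finset.mul_sum]
    congr 1
    have hNj : N - j = (P - j) + (N - P) := by omega
    rw [hNj, Nat.add_choose_eq, Finset.Nat.sum_antidiagonal_eq_sum_range_succ_mk]
    apply Finset.sum_nbij' (fun i => i - j) (fun k => k + j)
    · intro a ha; rw [Finset.mem_Icc] at ha; rw [Finset.mem_range]; omega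
    · intro a ha; rw [Finset.mem_range] at ha; rw [Finset.mem_Icc]; omega
    · intro a ha; rw [Finset.mem_Icc] at ha; omega
    · intro a ha; rw [Finset.mem_range] at ha; omega
    · intro a ha; rw [Finset.mem_Icc] at ha
      congr 2
      omega
  · rw [Nat.choose_eq_zero_of_lt hjP, Nat.zero_mul]
    apply Finset.sum_eq_zero
    intro i hi
    rw [Finset.mem_Icc] at hi
    rw [Nat.choose_eq_zero_of_lt (by omega : P < i)]
    ring

theorem hypergeometric_moment_bounds (N P n : ℕ) (hP : P ≤ N) (hn : n ≤ N) :
    (∀ j : ℕ, j ≤ n →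
      ((N.choose n : ℝ))⁻¹ *
          ∑ i ∈ Finset.Icc j n,
            (P.choose i : ℝ) * ((N - P).choose (n - i) : ℝ) * (i.choose j : ℝ) ≤
        (n.choose j : ℝ) * ((P : ℝ) / N) ^ j) ∧
    (∀ τ : ℝ, 1 ≤ τ →
      ((N.choose n : ℝ))⁻¹ *
          ∑ i ∈ Finset.range (n + 1),
            (P.choose i : ℝ) * ((N - P).choose (n - i) : ℝ) * τ ^ i ≤
        (1 + (τ - 1) * ((P : ℝ) / N)) ^ n) := by
  rcases Nat.eq_zero_or_pos N with hN | hN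
  · subst hN
    have hP0 : P = 0 := by omega
    have hn0 : n = 0 := by omega
    subst hP0; subst hn0
    constructor
    · intro j hj
      have : j = 0 := Nat.le_zero.mp hj
      subst this
      simp
    · intro τ hτ
      simp
  have hNpos : (0 : ℝ) < N := by exact_mod_cast hN
  have hCpos : (0 : ℝ) < N.choose n := by exact_mod_cast Nat.choose_pos hn
  have part1 : ∀ j : ℕ, j ≤ n →
      ((N.choose n : ℝ))⁻¹ *
          ∑ i ∈ Finset.Icc j n,
            (P.choose i : ℝ) * ((N - P).choose (n - i) : ℝ) * (i.choose j : ℝ) ≤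
        (n.choose j : ℝ) * ((P : ℝ) / N) ^ j := by
    intro j hj
    rw [inv_mul_le_iff₀ hCpos]
    have hsum : ∑ i ∈ Finset.Icc j n,
        (P.choose i : ℝ) * ((N - P).choose (n - i) : ℝ) * (i.choose j : ℝ)
          = ((P.choose j * (N - j).choose (n - j) : ℕ) : ℝ) := by
      rw [← sumA hP hj]
      push_cast
      rfl
    rw [hsum]
    have hid : (N.choose n : ℕ) * n.choose j = N.choose j * (N - j).choose (n - j) :=
      Nat.choose_mul hj
    have hid' : (n.choose j : ℝ) * (N.choose n : ℝ)
        = (N.choose j : ℝ) * ((N - j).choose (n - j) : ℝ) := by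
      exact_mod_cast (mul_comm (N.choose n) (n.choose j)) ▸ congrArg (Nat.cast (R := ℝ)) hid
    have hr : (N.choose n : ℝ) * ((n.choose j : ℝ) * ((P:ℝ)/N) ^ j)
        = ((N - j).choose (n - j) : ℝ) * ((N.choose j : ℝ) * ((P:ℝ)/N) ^ j) := by
      rw [← mul_assoc, mul_comm ((N.choose n : ℝ)), hid']; ring
    rw [hr]
    push_cast
    rw [mul_comm ((P.choose j : ℝ))]
    apply mul_le_mul_of_nonneg_left _ (by positivity)
    -- P.choose j ≤ N.choose j * (P/N)^j
    rw [div_pow, mul_div_assoc', le_div_iff₀ (by positivity)]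
    calc (P.choose j : ℝ) * (N : ℝ) ^ j = ((P.choose j * N ^ j : ℕ) : ℝ) := by push_cast; ring
      _ ≤ ((N.choose j * P ^ j : ℕ) : ℝ) := by exact_mod_cast chooseB j hP
      _ = (N.choose j : ℝ) * (P : ℝ) ^ j := by push_cast; ring
  refine ⟨part1, ?_⟩
  intro τ hτ
  set p : ℝ := (P : ℝ) / N with hp
  have hτ1 : 0 ≤ τ - 1 := by linarith
  have expand : ∑ i ∈ Finset.range (n + 1),
      (P.choose i : ℝ) * ((N - P).choose (n - i) : ℝ) * τ ^ i
        = ∑ j ∈ Finset.range (n + 1), (τ - 1) ^ j *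
            ∑ i ∈ Finset.Icc j n,
              (P.choose i : ℝ) * ((N - P).choose (n - i) : ℝ) * (i.choose j : ℝ) := by
    have hτi : ∀ i : ℕ, τ ^ i = ∑ j ∈ Finset.range (i + 1), (τ - 1) ^ j * (i.choose j : ℝ) := by
      intro i
      have := add_pow (τ - 1) 1 i
      simp only [one_pow, mul_one] at this
      rw [show τ ^ i = ((τ - 1) + 1) ^ i by ring, this]
    calc ∑ i ∈ Finset.range (n + 1),
        (P.choose i : ℝ) * ((N - P).choose (n - i) : ℝ) * τ ^ i
        = ∑ i ∈ Finset.range (n + 1), ∑ j ∈ Finset.range (i + 1),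
            (τ - 1) ^ j * ((P.choose i : ℝ) * ((N - P).choose (n - i) : ℝ) * (i.choose j : ℝ)) := by
          apply Finset.sum_congr rfl
          intro i _
          rw [hτi i, Finset.mul_sum]
          apply Finset.sum_congr rfl
          intro j _
          ring
      _ = ∑ j ∈ Finset.range (n + 1), ∑ i ∈ Finset.Icc j n,
            (τ - 1) ^ j * ((P.choose i : ℝ) * ((N - P).choose (n - i) : ℝ) * (i.choose j : ℝ)) := by
          apply Finset.sum_comm'
          intro i j
          simp only [Finset.mem_range, Finset.mem_Icc]
          omega
      _ = _ := by
          apply Finset.sum_congr rfl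
          intro j _
          rw [Finset.mul_sum]
  rw [expand, Finset.mul_sum]
  have final : (1 + (τ - 1) * p) ^ n
      = ∑ j ∈ Finset.range (n + 1), (τ - 1) ^ j * ((n.choose j : ℝ) * p ^ j) := by
    have := add_pow ((τ - 1) * p) 1 n
    simp only [one_pow, mul_one] at this
    rw [show (1 + (τ - 1) * p) ^ n = ((τ - 1) * p + 1) ^ n by ring, this]
    apply Finset.sum_congr rfl
    intro j _
    rw [mul_pow]
    ring
  rw [final]
  apply Finset.sum_le_sum
  intro j hj
  rw [Finset.mem_range] at hj
  have h1 := part1 j (by omega)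
  calc (N.choose n : ℝ)⁻¹ * ((τ - 1) ^ j *
        ∑ i ∈ Finset.Icc j n,
          (P.choose i : ℝ) * ((N - P).choose (n - i) : ℝ) * (i.choose j : ℝ))
      = (τ - 1) ^ j * ((N.choose n : ℝ)⁻¹ *
        ∑ i ∈ Finset.Icc j n,
          (P.choose i : ℝ) * ((N - P).choose (n - i) : ℝ) * (i.choose j : ℝ)) := by ring
    _ ≤ (τ - 1) ^ j * ((n.choose j : ℝ) * p ^ j) :=
        mul_le_mul_of_nonneg_left h1 (by positivity)
end

section
/- (Hypergeometric tail / negatively-correlated Chernoff) Let $X_1,\dots,X_n$ be $\{0,1\}$-valued random variables and $p_1,\dots,p_n \in [0,1]$ such that for every $I \subseteq \{1,\dots,n\}$, $\mathbb{E}[\prod_{i\in I} X_i] \leq \prod_{i\in I} p_i$. Set $X = \sum_i X_i$ and $p = (1/n)\sum_i p_i$. Then for any $t \in [0,1-p]$, $\Pr[X \geq (p+t)n] \leq e^{-D(p+t\|p)n}$. -/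
open MeasureTheory ProbabilityTheory

/-- Binary Kullback-Leibler divergence. -/
noncomputable def klBin (a b : ℝ) : ℝ :=
  a * Real.log (a / b) + (1 - a) * Real.log ((1 - a) / (1 - b))

/-- AM-GM: product of nonnegatives is at most the n-th power of the average. -/
lemma prod_le_avg_pow {n : ℕ} (f : Fin n → ℝ) (hf : ∀ i, 0 ≤ f i) :
    ∏ i, f i ≤ ((∑ i, f i) / n) ^ n := by
  rcases Nat.eq_zero_or_pos n with h | h
  · subst h; simp
  have hn : (0:ℝ) < n := Nat.cast_pos.mpr h
  have key := Real.geom_mean_le_arith_mean_weighted Finset.univ (fun _ => 1/(n:ℝ)) f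
    (fun i _ => by positivity) (by simp; field_simp) (fun i _ => hf i)
  have h1 : ∏ i, f i = (∏ i, f i ^ ((1:ℝ)/n)) ^ n := by
    rw [← Finset.prod_pow]
    refine Finset.prod_congr rfl fun i _ => ?_
    rw [← Real.rpow_natCast (f i ^ ((1:ℝ)/n)) n, ← Real.rpow_mul (hf i)]
    rw [show (1:ℝ)/n * n = 1 by field_simp, Real.rpow_one]
  calc ∏ i, f i = (∏ i, f i ^ ((1:ℝ)/n)) ^ n := h1
    _ ≤ (∑ i, (1/(n:ℝ)) * f i) ^ n :=
        pow_le_pow_left₀ (Finset.prod_nonneg fun i _ => Real.rpow_nonneg (hf i) _) key n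
    _ = ((∑ i, f i) / n) ^ n := by rw [← Finset.mul_sum]; ring

/-- Bounded measurable functions are integrable on a probability measure. -/
lemma integrable_bdd {Ω : Type*} [MeasurableSpace Ω] (μ : Measure Ω) [IsProbabilityMeasure μ]
    {g : Ω → ℝ} (hg : Measurable g) (C : ℝ) (hC : ∀ ω, |g ω| ≤ C) : Integrable g μ :=
  (integrable_const C).mono' hg.aestronglyMeasurable
    (Filter.Eventually.of_forall fun ω => by simpa [Real.norm_eq_abs] using hC ω)

lemma key_integral {Ω : Type*} [MeasurableSpace Ω] (μ : Measure Ω) [IsProbabilityMeasure μ]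
    {n : ℕ} (ps : Fin n → ℝ) (X : Fin n → Ω → ℝ)
    (hmeas : ∀ i, Measurable (X i)) (hval : ∀ i ω, X i ω = 0 ∨ X i ω = 1)
    (hnegcor : ∀ I : Finset (Fin n), ∫ ω, ∏ i ∈ I, X i ω ∂μ ≤ ∏ i ∈ I, ps i)
    (c : ℝ) (hc : 0 ≤ c) :
    ∫ ω, ∏ i, (1 + c * X i ω) ∂μ ≤ ∏ i, (1 + c * ps i) := by
  have hX0 : ∀ i ω, 0 ≤ X i ω := fun i ω => by rcases hval i ω with h | h <;> simp [h]
  have hX1 : ∀ i ω, X i ω ≤ 1 := fun i ω => by rcases hval i ω with h | h <;> simp [h]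
  have expand : ∀ (Y : Fin n → ℝ), ∏ i, (1 + c * Y i) =
      ∑ I ∈ (Finset.univ : Finset (Fin n)).powerset, c ^ I.card * ∏ i ∈ I, Y i := by
    intro Y
    have h := Finset.prod_add (fun i => c * Y i) (fun _ => (1:ℝ)) Finset.univ
    simp only [Finset.prod_const_one, mul_one] at h
    calc ∏ i, (1 + c * Y i) = ∏ i, (c * Y i + 1) := by simp [add_comm]
      _ = ∑ I ∈ Finset.univ.powerset, ∏ i ∈ I, (c * Y i) := h
      _ = ∑ I ∈ Finset.univ.powerset, c ^ I.card * ∏ i ∈ I, Y i := by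
          refine Finset.sum_congr rfl fun I _ => ?_
          rw [Finset.prod_mul_distrib, Finset.prod_const]
  have hintI : ∀ I : Finset (Fin n), Integrable (fun ω => ∏ i ∈ I, X i ω) μ := by
    intro I
    refine integrable_bdd μ (Finset.measurable_prod I fun i _ => hmeas i) 1 fun ω => ?_
    rw [abs_of_nonneg (Finset.prod_nonneg fun i _ => hX0 i ω)]
    exact Finset.prod_le_one (fun i _ => hX0 i ω) (fun i _ => hX1 i ω)
  calc ∫ ω, ∏ i, (1 + c * X i ω) ∂μ
      = ∑ I ∈ Finset.univ.powerset, ∫ ω, c ^ I.card * ∏ i ∈ I, X i ω ∂μ := by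
        simp_rw [expand]
        exact integral_finset_sum _ fun I _ => (hintI I).const_mul _
    _ ≤ ∑ I ∈ Finset.univ.powerset, c ^ I.card * ∏ i ∈ I, ps i := by
        refine Finset.sum_le_sum fun I _ => ?_
        rw [integral_const_mul]
        exact mul_le_mul_of_nonneg_left (hnegcor I) (pow_nonneg hc _)
    _ = ∏ i, (1 + c * ps i) := (expand ps).symm


theorem chernoff_negative_correlation {Ω : Type*} [MeasurableSpace Ω]
    (μ : Measure Ω) [IsProbabilityMeasure μ] (n : ℕ) (ps : Fin n → ℝ)
    (X : Fin n → Ω → ℝ)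
    (hmeas : ∀ i, Measurable (X i))
    (hval : ∀ i ω, X i ω = 0 ∨ X i ω = 1)
    (hps : ∀ i, ps i ∈ Set.Icc (0 : ℝ) 1)
    (hnegcor : ∀ I : Finset (Fin n), ∫ ω, ∏ i ∈ I, X i ω ∂μ ≤ ∏ i ∈ I, ps i)
    (t : ℝ) (ht0 : 0 ≤ t) (ht1 : t ≤ 1 - (∑ i, ps i) / n) :
    (μ {ω | ((∑ i, ps i) / n + t) * n ≤ ∑ i, X i ω}).toReal ≤
      Real.exp (-(klBin ((∑ i, ps i) / n + t) ((∑ i, ps i) / n)) * n) := by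
  classical
  set p : ℝ := (∑ i, ps i) / n with hpdef
  set a : ℝ := p + t with hadef
  have hX0 : ∀ i ω, 0 ≤ X i ω := fun i ω => by rcases hval i ω with h | h <;> simp [h]
  have hX1 : ∀ i ω, X i ω ≤ 1 := fun i ω => by rcases hval i ω with h | h <;> simp [h]
  have hsum0 : 0 ≤ ∑ i, ps i := Finset.sum_nonneg fun i _ => (hps i).1
  have hp0 : 0 ≤ p := by positivity
  have ha1 : a ≤ 1 := by rw [hadef]; linarith
  have hpa : p ≤ a := by rw [hadef]; linarith
  have hprob : ∀ s : Set Ω, (μ s).toReal ≤ 1 := by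
    intro s
    have h := measure_mono (μ := μ) (Set.subset_univ s)
    rw [measure_univ] at h
    exact ENNReal.toReal_le_of_le_ofReal zero_le_one (by simpa using h)
  have hSmeas : MeasurableSet {ω | a * (n:ℝ) ≤ ∑ i, X i ω} := by
    apply measurableSet_le measurable_const
    exact Finset.measurable_sum _ fun i _ => hmeas i
  by_cases hp : p = 0
  · -- trivial case: RHS ≥ 1
    have hkl : klBin a p ≤ 0 := by
      rw [hp]
      unfold klBin
      rw [div_zero, Real.log_zero, mul_zero, zero_add, sub_zero, div_one]
      exact mul_nonpos_of_nonneg_of_nonpos (by linarith)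
        (Real.log_nonpos (by linarith) (by rw [hadef]; linarith))
    calc (μ _).toReal ≤ 1 := hprob _
      _ ≤ Real.exp (-klBin a p * n) := by
          rw [← Real.exp_zero]
          apply Real.exp_le_exp.mpr
          have : (0:ℝ) ≤ n := Nat.cast_nonneg n
          nlinarith
  · have hp0' : 0 < p := lt_of_le_of_ne hp0 (Ne.symm hp)
    have hn : 0 < n := by
      rcases Nat.eq_zero_or_pos n with h | h
      · exact absurd (by simp [hpdef, h]) hp
      · exact h
    have hnR : (0:ℝ) < n := Nat.cast_pos.mpr hn
    have ha0 : 0 < a := lt_of_lt_of_le hp0' hpa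
    by_cases haone : a = 1
    · -- case a = 1
      have hkl : klBin a p = -Real.log p := by
        unfold klBin
        rw [haone]
        simp [Real.log_div one_ne_zero (ne_of_gt hp0'), Real.log_one]
      rw [hkl, neg_neg, mul_comm (Real.log p) (n:ℝ), Real.exp_nat_mul, Real.exp_log hp0']
      -- show μ {n ≤ ∑ X} ≤ p ^ n
      have hsubone : ∀ ω, a * (n:ℝ) ≤ ∑ i, X i ω → ∀ i, X i ω = 1 := by
        intro ω hω i
        rcases hval i ω with h | h
        · exfalso
          have hsum : ∑ j, X j ω ≤ (n:ℝ) - 1 := by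
            have herase : ∑ j ∈ Finset.univ.erase i, X j ω + X i ω = ∑ j, X j ω :=
              Finset.sum_erase_add _ _ (Finset.mem_univ i)
            have hle : ∑ j ∈ Finset.univ.erase i, X j ω ≤ ((Finset.univ.erase i).card : ℝ) * 1 := by
              calc ∑ j ∈ Finset.univ.erase i, X j ω
                  ≤ ∑ _j ∈ Finset.univ.erase i, (1:ℝ) :=
                    Finset.sum_le_sum fun j _ => hX1 j ω
                _ = ((Finset.univ.erase i).card : ℝ) * 1 := by simp
            rw [Finset.card_erase_of_mem (Finset.mem_univ i), Finset.card_univ,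
              Fintype.card_fin] at hle
            have hcard : ((n - 1 : ℕ) : ℝ) = (n:ℝ) - 1 := by
              have : 1 ≤ n := hn
              push_cast [this]; ring
            rw [hcard, mul_one] at hle
            linarith [herase, h]
          rw [haone, one_mul] at hω
          linarith
        · exact h
      have hind : ∀ ω, ({ω | a * (n:ℝ) ≤ ∑ i, X i ω}).indicator
          (fun _ => (1:ℝ)) ω ≤ ∏ i, X i ω := by
        intro ω
        by_cases hω : ω ∈ {ω | a * (n:ℝ) ≤ ∑ i, X i ω}
        · rw [Set.indicator_of_mem hω]
          have h1 : ∏ i, X i ω = 1 := Finset.prod_eq_one fun i _ => hsubone ω hω i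
          rw [h1]
        · rw [Set.indicator_of_notMem hω]
          exact Finset.prod_nonneg fun i _ => hX0 i ω
      have hintP : Integrable (fun ω => ∏ i, X i ω) μ := by
        refine integrable_bdd μ (Finset.measurable_prod _ fun i _ => hmeas i) 1 fun ω => ?_
        rw [abs_of_nonneg (Finset.prod_nonneg fun i _ => hX0 i ω)]
        exact Finset.prod_le_one (fun i _ => hX0 i ω) (fun i _ => hX1 i ω)
      have hindint : Integrable
          (({ω | a * (n:ℝ) ≤ ∑ i, X i ω}).indicator (fun _ => (1:ℝ))) μ :=
        (integrable_const (1:ℝ)).indicator hSmeas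
      calc (μ {ω | a * (n:ℝ) ≤ ∑ i, X i ω}).toReal
          = ∫ ω, ({ω | a * (n:ℝ) ≤ ∑ i, X i ω}).indicator (fun _ => (1:ℝ)) ω ∂μ := by
            rw [show (fun _ : Ω => (1:ℝ)) = (1 : Ω → ℝ) from rfl,
              integral_indicator_one hSmeas]
            rfl
        _ ≤ ∫ ω, ∏ i, X i ω ∂μ := integral_mono hindint hintP hind
        _ ≤ ∏ i, ps i := hnegcor Finset.univ
        _ ≤ ((∑ i, ps i) / n) ^ n := prod_le_avg_pow ps fun i => (hps i).1
        _ = p ^ n := by rw [hpdef]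
    · -- main case: p > 0, a < 1
      have ha1' : a < 1 := lt_of_le_of_ne ha1 haone
      have h1a : 0 < 1 - a := by linarith
      have h1p : 0 < 1 - p := by linarith
      set c : ℝ := (a - p) / (p * (1 - a)) with hcdef
      have hc : 0 ≤ c := div_nonneg (by linarith) (by positivity)
      have hc1 : (0:ℝ) < 1 + c := by linarith
      set l : ℝ := Real.log (1 + c) with hldef
      have hl0 : 0 ≤ l := Real.log_nonneg (by linarith)
      have hptws : ∀ ω, Real.exp (l * ∑ i, X i ω) = ∏ i, (1 + c * X i ω) := by
        intro ω
        rw [Finset.mul_sum, Real.exp_sum]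
        refine Finset.prod_congr rfl fun i _ => ?_
        rcases hval i ω with h | h
        · rw [h]; simp
        · rw [h]; simp [hldef, Real.exp_log hc1]
      set f : Ω → ℝ := fun ω => ∏ i, (1 + c * X i ω) with hfdef
      have hf0 : ∀ ω, 0 ≤ f ω := fun ω =>
        Finset.prod_nonneg fun i _ => by nlinarith [hX0 i ω, mul_nonneg hc (hX0 i ω)]
      have hfle : ∀ ω, f ω ≤ (1 + c) ^ n := by
        intro ω
        calc f ω ≤ ∏ _i : Fin n, (1 + c) := by
              refine Finset.prod_le_prod (fun i _ => by nlinarith [mul_nonneg hc (hX0 i ω)])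
                (fun i _ => by nlinarith [hX1 i ω])
          _ = (1 + c) ^ n := by simp
      have hfint : Integrable f μ := by
        refine integrable_bdd μ ?_ ((1 + c) ^ n) fun ω => ?_
        · exact Finset.measurable_prod _ fun i _ =>
            measurable_const.add ((hmeas i).const_mul c)
        · rw [abs_of_nonneg (hf0 ω)]; exact hfle ω
      set ε : ℝ := Real.exp (l * (a * n)) with hεdef
      have hε : 0 < ε := Real.exp_pos _
      have markov := mul_meas_ge_le_integral_of_nonneg
        (Filter.Eventually.of_forall hf0) hfint ε
      have hsubset : {ω | a * (n:ℝ) ≤ ∑ i, X i ω} ⊆ {ω | ε ≤ f ω} := by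
        intro ω hω
        simp only [Set.mem_setOf_eq, hfdef] at hω ⊢
        rw [← hptws ω, hεdef]
        exact Real.exp_le_exp.mpr (mul_le_mul_of_nonneg_left hω hl0)
      have hmono : (μ {ω | a * (n:ℝ) ≤ ∑ i, X i ω}).toReal ≤ (μ {ω | ε ≤ f ω}).toReal :=
        ENNReal.toReal_mono (measure_ne_top μ _) (measure_mono hsubset)
      have hcp : 1 + c * p = (1 - p) / (1 - a) := by
        rw [hcdef]; field_simp; ring
      have hbound : ε * (μ {ω | a * (n:ℝ) ≤ ∑ i, X i ω}).toReal ≤ (1 + c * p) ^ n := by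
        calc ε * (μ {ω | a * (n:ℝ) ≤ ∑ i, X i ω}).toReal
            ≤ ε * (μ {ω | ε ≤ f ω}).toReal := mul_le_mul_of_nonneg_left hmono hε.le
          _ ≤ ∫ ω, f ω ∂μ := markov
          _ ≤ ∏ i, (1 + c * ps i) := key_integral μ ps X hmeas hval hnegcor c hc
          _ ≤ ((∑ i, (1 + c * ps i)) / n) ^ n :=
              prod_le_avg_pow _ fun i => by nlinarith [mul_nonneg hc (hps i).1]
          _ = (1 + c * p) ^ n := by
              congr 1
              rw [Finset.sum_add_distrib, Finset.sum_const, ← Finset.mul_sum, hpdef]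
              field_simp
              simp
      have hlog : l = Real.log a + Real.log (1 - p) - (Real.log p + Real.log (1 - a)) := by
        have h1c : 1 + c = a * (1 - p) / (p * (1 - a)) := by
          rw [hcdef]; field_simp; ring
        rw [hldef, h1c, Real.log_div (by positivity) (by positivity),
          Real.log_mul ha0.ne' h1p.ne', Real.log_mul hp0'.ne' h1a.ne']
      have hkey : (1 + c * p) ^ n / ε = Real.exp (-klBin a p * n) := by
        rw [hcp, ← Real.exp_log (show (0:ℝ) < (1 - p) / (1 - a) by positivity),
          ← Real.exp_nat_mul, hεdef, ← Real.exp_sub]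
        congr 1
        rw [Real.log_div h1p.ne' h1a.ne', hlog]
        unfold klBin
        rw [Real.log_div ha0.ne' hp0'.ne', Real.log_div h1a.ne' h1p.ne']
        ring
      rw [← hkey, le_div_iff₀ hε, mul_comm]
      exact hbound
end
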